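/- Corollary 3.2, bounds on the density contrast: Let m ≥ 3 be an integer, n = m − 1, L₀ > 0, and let ρ : (a₁,a₀] × ℝⁿ → ℝ (with 0 ≤ a₁ < a₀) be continuous, everywhere positive, infinitely differentiable on (a₁,a₀) × ℝⁿ, periodic with period L₀ in each spatial coordinate for every a, and satisfy a ∂ρ/∂a = −(m−1) γ(a) ρ + ((m−2)/(2a²)) ( (3/2) |∇ρ|²/ρ² − Δρ/ρ ) on (a₁,a₀) × ℝⁿ, where γ : (a₁,a₀] → ℝ is continuous. Define, over the cell K = [0,L₀]ⁿ: ρ^{max}(a) := max_{x∈K} ρ(a,x), ρ^{min}(a) := min_{x∈K} ρ(a,x), the mean ρ̄(a) := L₀^{−n} ∫_K ρ(a,x) dx, the inhomogeneity modulus Δ(a) := (ρ^{max}(a) − ρ^{min}(a))/ρ^{max}(a), the density contrast δ(a,x) := (ρ(a,x) − ρ̄(a))/ρ̄(a), and Δ₀ := Δ(a₀). Then Δ(a) ≤ Δ₀ < 1 and, for every a ∈ (a₁,a₀] and x ∈ ℝⁿ, −Δ₀ ≤ −Δ(a) ≤ δ(a,x) ≤ Δ(a)/(1−Δ(a)) ≤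 Δ₀/(1−Δ₀). -/

import Mathlib

open scoped RealInnerProductSpace

noncomputable section

open MeasureTheory

/-- The Euclidean Laplacian: the sum of the second partial derivatives. -/
def lap {n : ℕ} (f : EuclideanSpace ℝ (Fin n) → ℝ) (x : EuclideanSpace ℝ (Fin n)) : ℝ :=
  ∑ i : Fin n,
    fderiv ℝ (fun y => fderiv ℝ f y (EuclideanSpace.single i 1)) x (EuclideanSpace.single i 1)

/-- The cubic cosmological cell `K = [0,L₀]ⁿ`. -/
def cell (n : ℕ) (L₀ : ℝ) : Set (EuclideanSpace ℝ (Fin n)) :=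
  {x | ∀ i, x i ∈ Set.Icc (0 : ℝ) L₀}

/-- The maximum of the energy density over the cell. -/
def rhoMax {n : ℕ} (L₀ : ℝ) (ρ : ℝ → EuclideanSpace ℝ (Fin n) → ℝ) (a : ℝ) : ℝ :=
  sSup (ρ a '' cell n L₀)

/-- The minimum of the energy density over the cell. -/
def rhoMin {n : ℕ} (L₀ : ℝ) (ρ : ℝ → EuclideanSpace ℝ (Fin n) → ℝ) (a : ℝ) : ℝ :=
  sInf (ρ a '' cell n L₀)

/-- The mean of the energy density over the cell. -/
def rhoMean {n : ℕ} (L₀ : ℝ) (ρ : ℝ → EuclideanSpace ℝ (Fin n) → ℝ) (a : ℝ) : ℝ :=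
  (L₀ ^ n)⁻¹ * ∫ x in cell n L₀, ρ a x

/-- The inhomogeneity modulus `Δ(a) = (ρ^{max}(a) − ρ^{min}(a))/ρ^{max}(a)`. -/
def inhomMod {n : ℕ} (L₀ : ℝ) (ρ : ℝ → EuclideanSpace ℝ (Fin n) → ℝ) (a : ℝ) : ℝ :=
  (rhoMax L₀ ρ a - rhoMin L₀ ρ a) / rhoMax L₀ ρ a

/-- The density contrast `δ(a,x) = (ρ(a,x) − ρ̄(a))/ρ̄(a)`. -/
def densityContrast {n : ℕ} (L₀ : ℝ) (ρ : ℝ → EuclideanSpace ℝ (Fin n) → ℝ)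
    (a : ℝ) (x : EuclideanSpace ℝ (Fin n)) : ℝ :=
  (ρ a x - rhoMean L₀ ρ a) / rhoMean L₀ ρ a

/-! At a spatial maximum of `ρ(a, ·)` the gradient vanishes and the Laplacian is nonpositive, so
the equation gives `a ∂ₐρ ≥ -(m-1)γρ` there; at a spatial minimum the reverse inequality holds.
Hence, for `a > 0`, the quotient `ρ(·, x_min)/ρ(·, x_max)` has nonpositive derivative at `a`; it
touches `ρ^{min}/ρ^{max}` at `a` and lies above it at later times, so a comparison argument shows
that `ρ^{min}/ρ^{max}` is nonincreasing, i.e. `Δ(a) ≤ Δ₀`. Periodicity makes the extrema over the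
cell global extrema over `ℝⁿ`. The bounds on `δ` are then elementary, since `ρ(a, x)` and `ρ̄(a)`
both lie in `[ρ^{min}(a), ρ^{max}(a)]`. -/

def IsCellPeriodic {n : ℕ} (L₀ : ℝ) (f : EuclideanSpace ℝ (Fin n) → ℝ) : Prop :=
  ∀ i : Fin n, ∀ x, f (x + L₀ • EuclideanSpace.single i (1 : ℝ)) = f x

def periods {E β : Type*} [AddGroup E] (f : E → β) : AddSubgroup E where
  carrier := {v | ∀ x, f (x + v) = f x}
  zero_mem' := by simp
  add_mem' {v w} hv hw x := by rw [← add_assoc, hw, hv]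
  neg_mem' {v} hv x := by rw [← hv (x + -v), neg_add_cancel_right]

section Cell

lemma cell_eq_preimage (n : ℕ) (L₀ : ℝ) :
    cell n L₀ = WithLp.ofLp ⁻¹' Set.univ.pi fun _ => Set.Icc 0 L₀ := by
  ext x
  simp only [cell, Set.mem_preimage, Set.mem_univ_pi]
  rfl

lemma isCompact_cell (n : ℕ) (L₀ : ℝ) : IsCompact (cell n L₀) := by
  rw [cell_eq_preimage]
  exact (EuclideanSpace.equiv (Fin n) ℝ).toHomeomorph.isCompact_preimage.2
    (isCompact_univ_pi fun _ => isCompact_Icc)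

lemma volume_cell (n : ℕ) {L₀ : ℝ} (hL₀ : 0 ≤ L₀) :
    volume (cell n L₀) = ENNReal.ofReal (L₀ ^ n) := by
  rw [cell_eq_preimage]
  refine ((EuclideanSpace.volume_preserving_symm_measurableEquiv_toLp (Fin n)).measure_preimage
    (MeasurableSet.univ_pi fun _ => measurableSet_Icc).nullMeasurableSet).trans ?_
  rw [volume_pi_pi]
  simp [Real.volume_Icc, ENNReal.ofReal_pow hL₀]

variable {n : ℕ} {L₀ : ℝ} {f : EuclideanSpace ℝ (Fin n) → ℝ}

lemma IsCellPeriodic.exists_mem_cell_eq (hf : IsCellPeriodic L₀ f) (hL₀ : 0 < L₀)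
    (x : EuclideanSpace ℝ (Fin n)) : ∃ y ∈ cell n L₀, f y = f x := by
  let v := ∑ i, toIcoDiv hL₀ 0 (x i) • L₀ • EuclideanSpace.single i (1 : ℝ)
  have hv : v ∈ periods f :=
    AddSubgroup.sum_mem _ fun i _ =>
      AddSubgroup.zsmul_mem _ (show L₀ • EuclideanSpace.single i (1 : ℝ) ∈ periods f from hf i) _
  refine ⟨x - v, fun i => ?_, by simpa [sub_eq_add_neg] using (periods f).neg_mem hv x⟩
  have hcoord : (x - v) i = toIcoMod hL₀ 0 (x i) := by
    simp [v, toIcoMod, Finset.sum_apply, Pi.single_apply, zsmul_eq_mul, mul_comm]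
  rw [hcoord]
  exact Set.Ico_subset_Icc_self (by simpa using toIcoMod_mem_Ico' hL₀ (x i))

lemma IsCellPeriodic.exists_sSup_eq_isMaxOn (hf : IsCellPeriodic L₀ f) (hL₀ : 0 < L₀)
    (hc : Continuous f) : ∃ x, sSup (f '' cell n L₀) = f x ∧ IsMaxOn f Set.univ x := by
  obtain ⟨x, -, hsup, hge⟩ := (isCompact_cell n L₀).exists_sSup_image_eq_and_ge
    ⟨0, fun _ => by simp [hL₀.le]⟩ hc.continuousOn
  refine ⟨x, hsup, fun y _ => ?_⟩
  obtain ⟨z, hz, hzy⟩ := hf.exists_mem_cell_eq hL₀ y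
  exact (hzy ▸ hge z hz : f y ≤ f x)

lemma IsCellPeriodic.exists_sInf_eq_isMinOn (hf : IsCellPeriodic L₀ f) (hL₀ : 0 < L₀)
    (hc : Continuous f) : ∃ x, sInf (f '' cell n L₀) = f x ∧ IsMinOn f Set.univ x := by
  obtain ⟨x, -, hinf, hle⟩ := (isCompact_cell n L₀).exists_sInf_image_eq_and_le
    ⟨0, fun _ => by simp [hL₀.le]⟩ hc.continuousOn
  refine ⟨x, hinf, fun y _ => ?_⟩
  obtain ⟨z, hz, hzy⟩ := hf.exists_mem_cell_eq hL₀ y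
  exact (hzy ▸ hle z hz : f x ≤ f y)

end Cell

section Extrema
variable {n : ℕ} {L₀ : ℝ} {ρ : ℝ → EuclideanSpace ℝ (Fin n) → ℝ} {t : ℝ}

lemma rhoMin_le (hL₀ : 0 < L₀) (hc : Continuous (ρ t)) (hper : IsCellPeriodic L₀ (ρ t))
    (x : EuclideanSpace ℝ (Fin n)) : rhoMin L₀ ρ t ≤ ρ t x := by
  obtain ⟨xm, hxm, hmin⟩ := hper.exists_sInf_eq_isMinOn hL₀ hc
  rw [rhoMin, hxm]
  exact hmin (Set.mem_univ x)

lemma le_rhoMax (hL₀ : 0 < L₀) (hc : Continuous (ρ t)) (hper : IsCellPeriodic L₀ (ρ t))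
    (x : EuclideanSpace ℝ (Fin n)) : ρ t x ≤ rhoMax L₀ ρ t := by
  obtain ⟨xM, hxM, hmax⟩ := hper.exists_sSup_eq_isMaxOn hL₀ hc
  rw [rhoMax, hxM]
  exact hmax (Set.mem_univ x)

lemma rhoMin_pos (hL₀ : 0 < L₀) (hc : Continuous (ρ t)) (hper : IsCellPeriodic L₀ (ρ t))
    (hpos : ∀ x, 0 < ρ t x) : 0 < rhoMin L₀ ρ t := by
  obtain ⟨xm, hxm, -⟩ := hper.exists_sInf_eq_isMinOn hL₀ hc
  rw [rhoMin, hxm]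
  exact hpos xm

lemma rhoMax_pos (hL₀ : 0 < L₀) (hc : Continuous (ρ t)) (hper : IsCellPeriodic L₀ (ρ t))
    (hpos : ∀ x, 0 < ρ t x) : 0 < rhoMax L₀ ρ t :=
  (hpos 0).trans_le (le_rhoMax hL₀ hc hper 0)

lemma inhomMod_eq_one_sub (h : rhoMax L₀ ρ t ≠ 0) :
    inhomMod L₀ ρ t = 1 - rhoMin L₀ ρ t / rhoMax L₀ ρ t := by
  rw [inhomMod, sub_div, div_self h]

lemma rhoMean_eq_setAverage (hL₀ : 0 < L₀) : rhoMean L₀ ρ t = ⨍ x in cell n L₀, ρ t x := by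
  rw [setAverage_eq, smul_eq_mul, measureReal_def, volume_cell n hL₀.le,
    ENNReal.toReal_ofReal (by positivity), rhoMean]

lemma rhoMean_mem_Icc (hL₀ : 0 < L₀) {lo hi : ℝ} (hc : Continuous (ρ t))
    (hbounds : ∀ y ∈ cell n L₀, ρ t y ∈ Set.Icc lo hi) : rhoMean L₀ ρ t ∈ Set.Icc lo hi := by
  rw [rhoMean_eq_setAverage hL₀]
  refine (convex_Icc lo hi).set_average_mem isClosed_Icc ?_ ?_
    (ae_restrict_of_forall_mem (isCompact_cell n L₀).measurableSet hbounds)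
    (hc.continuousOn.integrableOn_compact (isCompact_cell n L₀))
  · rw [volume_cell n hL₀.le]
    exact (ENNReal.ofReal_pos.2 (by positivity)).ne'
  · rw [volume_cell n hL₀.le]
    exact ENNReal.ofReal_ne_top

lemma rhoMean_mem_Icc_rhoMin_rhoMax (hL₀ : 0 < L₀) (hc : Continuous (ρ t))
    (hper : IsCellPeriodic L₀ (ρ t)) : rhoMean L₀ ρ t ∈ Set.Icc (rhoMin L₀ ρ t) (rhoMax L₀ ρ t) :=
  rhoMean_mem_Icc hL₀ hc fun y _ => ⟨rhoMin_le hL₀ hc hper y, le_rhoMax hL₀ hc hper y⟩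

variable {s : Set ℝ}

lemma continuousOn_rhoMax
    (hρ : ContinuousOn (fun p : ℝ × EuclideanSpace ℝ (Fin n) => ρ p.1 p.2) (s ×ˢ Set.univ)) :
    ContinuousOn (rhoMax L₀ ρ) s := by
  rw [continuousOn_iff_continuous_domRestrict]
  exact (isCompact_cell n L₀).continuous_sSup (f := fun (t : s) x => ρ t x)
    (hρ.comp_continuous (continuous_subtype_val.fst'.prodMk continuous_snd)
      fun p => ⟨p.1.2, trivial⟩)

lemma continuousOn_rhoMin
    (hρ : ContinuousOn (fun p : ℝ × EuclideanSpace ℝ (Fin n) => ρ p.1 p.2) (s ×ˢ Set.univ)) :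
    ContinuousOn (rhoMin L₀ ρ) s := by
  rw [continuousOn_iff_continuous_domRestrict]
  exact (isCompact_cell n L₀).continuous_sInf (f := fun (t : s) x => ρ t x)
    (hρ.comp_continuous (continuous_subtype_val.fst'.prodMk continuous_snd)
      fun p => ⟨p.1.2, trivial⟩)

end Extrema

section Slices
variable {n : ℕ} {ρ : ℝ → EuclideanSpace ℝ (Fin n) → ℝ} {s : Set ℝ} {t : ℝ} {k : WithTop ℕ∞}

lemma continuous_slice
    (hρ : ContinuousOn (fun p : ℝ × EuclideanSpace ℝ (Fin n) => ρ p.1 p.2) (s ×ˢ Set.univ))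
    (ht : t ∈ s) : Continuous (ρ t) :=
  hρ.comp_continuous (Continuous.prodMk_right t) fun _ => ⟨ht, trivial⟩

lemma contDiffAt_uncurry
    (hρ : ContDiffOn ℝ k (fun p : ℝ × EuclideanSpace ℝ (Fin n) => ρ p.1 p.2) (s ×ˢ Set.univ))
    (hs : IsOpen s) (ht : t ∈ s) (x : EuclideanSpace ℝ (Fin n)) :
    ContDiffAt ℝ k (fun p : ℝ × EuclideanSpace ℝ (Fin n) => ρ p.1 p.2) (t, x) :=
  hρ.contDiffAt (prod_mem_nhds (hs.mem_nhds ht) Filter.univ_mem)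

lemma contDiffAt_slice
    (hρ : ContDiffOn ℝ k (fun p : ℝ × EuclideanSpace ℝ (Fin n) => ρ p.1 p.2) (s ×ˢ Set.univ))
    (hs : IsOpen s) (ht : t ∈ s) (x : EuclideanSpace ℝ (Fin n)) : ContDiffAt ℝ k (ρ t) x :=
  (contDiffAt_uncurry hρ hs ht x).comp x (contDiffAt_const.prodMk contDiffAt_id)

lemma hasDerivAt_time (hk : k ≠ 0)
    (hρ : ContDiffOn ℝ k (fun p : ℝ × EuclideanSpace ℝ (Fin n) => ρ p.1 p.2) (s ×ˢ Set.univ))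
    (hs : IsOpen s) (ht : t ∈ s) (x : EuclideanSpace ℝ (Fin n)) :
    HasDerivAt (fun u => ρ u x) (deriv (fun u => ρ u x) t) t :=
  (DifferentiableAt.comp (g := fun p : ℝ × EuclideanSpace ℝ (Fin n) => ρ p.1 p.2)
    (f := fun u => (u, x)) t ((contDiffAt_uncurry hρ hs ht x).differentiableAt hk)
    (differentiableAt_id.prodMk (differentiableAt_const x))).hasDerivAt

end Slices

section SecondDerivative
open Filter Topology

theorem IsLocalMax.hasDerivAt_deriv_nonpos {g g' : ℝ → ℝ} {x c : ℝ} (h : IsLocalMax g x)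
    (hg : ∀ᶠ y in 𝓝 x, HasDerivAt g (g' y) y) (hg' : HasDerivAt g' c x) : c ≤ 0 := by
  by_contra! hc
  have hg'x : g' x = 0 := h.hasDerivAt_eq_zero hg.self_of_nhds
  have hpos : ∀ᶠ y in 𝓝[>] x, 0 < g' y := by
    filter_upwards [((hasDerivAt_iff_tendsto_slope.1 hg').mono_left (nhdsGT_le_nhdsNE x)).eventually
      (eventually_gt_nhds hc), self_mem_nhdsWithin] with y hy hxy
    rw [slope_def_field, hg'x, sub_zero] at hy
    exact (div_pos_iff_of_pos_right (sub_pos.2 hxy)).1 hy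
  have hmax : ∀ᶠ y in 𝓝 x, g y ≤ g x := h
  obtain ⟨ε, hxε, hε⟩ := mem_nhdsGT_iff_exists_Ioo_subset.1
    (hpos.and ((hmax.filter_mono nhdsWithin_le_nhds).and (hg.filter_mono nhdsWithin_le_nhds)))
  set y := (x + ε) / 2
  have hxy : x < y := by simp only [y]; linarith [hxε.out]
  have hyε : y < ε := by simp only [y]; linarith [hxε.out]
  have hderiv : ∀ z ∈ Set.Ioo x y, HasDerivAt g (g' z) z := fun z hz =>
    (hε ⟨hz.1, hz.2.trans hyε⟩).2.2
  have hcont : ContinuousOn g (Set.Icc x y) := by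
    intro z hz
    rcases hz.1.eq_or_lt with rfl | hxz
    · exact hg.self_of_nhds.continuousAt.continuousWithinAt
    · exact (hε ⟨hxz, hz.2.trans_lt hyε⟩).2.2.continuousAt.continuousWithinAt
  obtain ⟨ξ, hξ, hslope⟩ := exists_hasDerivAt_eq_slope g g' hxy hcont hderiv
  have hgy : g y ≤ g x := (hε ⟨hxy, hyε⟩).2.1
  have : g' ξ ≤ 0 := hslope ▸ div_nonpos_of_nonpos_of_nonneg (by linarith) (by linarith)
  exact this.not_gt (hε ⟨hξ.1, hξ.2.trans hyε⟩).1

theorem IsLocalMax.fderiv_fderiv_apply_nonpos {E : Type*} [NormedAddCommGroup E]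
    [NormedSpace ℝ E] {f : E → ℝ} {x : E} (h : IsLocalMax f x) (hf : ContDiffAt ℝ 2 f x)
    (v : E) : fderiv ℝ (fun y => fderiv ℝ f y v) x v ≤ 0 := by
  have hline : ∀ s : ℝ, HasDerivAt (fun s : ℝ => x + s • v) v s := fun s => by
    simpa using ((hasDerivAt_id s).smul_const v).const_add x
  have hline0 : Tendsto (fun s : ℝ => x + s • v) (𝓝 0) (𝓝 x) := by
    simpa using (hline 0).continuousAt.tendsto
  have hmax : IsLocalMax f (x + (0 : ℝ) • v) := by simpa using h
  refine IsLocalMax.hasDerivAt_deriv_nonpos (g := fun s => f (x + s • v))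
    (g' := fun s => fderiv ℝ f (x + s • v) v)
    (IsLocalMax.comp_continuous (g := fun s : ℝ => x + s • v) hmax (hline 0).continuousAt) ?_ ?_
  · filter_upwards [hline0.eventually (hf.eventually (by simp))] with s hs
    exact (hs.differentiableAt (by simp)).hasFDerivAt.comp_hasDerivAt s (hline s)
  · have hdf : DifferentiableAt ℝ (fun y => fderiv ℝ f y v) x :=
      (hf.fderiv_right (m := 1) (by norm_num)).differentiableAt (by simp) |>.clm_apply
        (differentiableAt_const v)
    have hdf' : HasFDerivAt (fun y => fderiv ℝ f y v) (fderiv ℝ (fun y => fderiv ℝ f y v) x)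
        (x + (0 : ℝ) • v) := by
      rw [zero_smul, add_zero]
      exact hdf.hasFDerivAt
    exact hdf'.comp_hasDerivAt 0 (hline 0)

end SecondDerivative

section Laplacian
variable {n : ℕ} {f : EuclideanSpace ℝ (Fin n) → ℝ} {x : EuclideanSpace ℝ (Fin n)}

lemma lap_neg (f : EuclideanSpace ℝ (Fin n) → ℝ) (x : EuclideanSpace ℝ (Fin n)) :
    lap (fun y => -f y) x = -lap f x := by
  simp [lap, fderiv_fun_neg]

lemma IsLocalMax.lap_nonpos (h : IsLocalMax f x) (hf : ContDiffAt ℝ 2 f x) : lap f x ≤ 0 :=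
  Finset.sum_nonpos fun _ _ => h.fderiv_fderiv_apply_nonpos hf _

lemma IsLocalMin.lap_nonneg (h : IsLocalMin f x) (hf : ContDiffAt ℝ 2 f x) : 0 ≤ lap f x := by
  simpa [lap_neg] using h.neg.lap_nonpos hf.neg

lemma IsLocalExtr.gradient_eq_zero (h : IsLocalExtr f x) : gradient f x = 0 := by
  rw [gradient, h.fderiv_eq_zero, map_zero]

end Laplacian

section ContinuityEquation
variable {n m : ℕ} {γ : ℝ → ℝ} {ρ : ℝ → EuclideanSpace ℝ (Fin n) → ℝ} {t : ℝ}
  {x : EuclideanSpace ℝ (Fin n)}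

lemma timeDeriv_ge_of_isLocalMax (hm : 2 ≤ m) (hpos : 0 ≤ ρ t x) (hρ : ContDiffAt ℝ 2 (ρ t) x)
    (hmax : IsLocalMax (ρ t) x)
    (hpde : t * deriv (fun s => ρ s x) t =
      -((m : ℝ) - 1) * γ t * ρ t x +
        (((m : ℝ) - 2) / (2 * t ^ 2)) *
          ((3 / 2) * ‖gradient (ρ t) x‖ ^ 2 / (ρ t x) ^ 2 - lap (ρ t) x / ρ t x)) :
    -((m : ℝ) - 1) * γ t * ρ t x ≤ t * deriv (fun s => ρ s x) t := by
  have hm' : (2 : ℝ) ≤ m := by exact_mod_cast hm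
  rw [hpde, IsLocalExtr.gradient_eq_zero (Or.inr hmax), norm_zero,
    zero_pow two_ne_zero, mul_zero, zero_div, zero_sub]
  exact le_add_of_nonneg_right (mul_nonneg (by positivity)
    (neg_nonneg.2 (div_nonpos_of_nonpos_of_nonneg (hmax.lap_nonpos hρ) hpos)))

lemma timeDeriv_le_of_isLocalMin (hm : 2 ≤ m) (hpos : 0 ≤ ρ t x) (hρ : ContDiffAt ℝ 2 (ρ t) x)
    (hmin : IsLocalMin (ρ t) x)
    (hpde : t * deriv (fun s => ρ s x) t =
      -((m : ℝ) - 1) * γ t * ρ t x +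
        (((m : ℝ) - 2) / (2 * t ^ 2)) *
          ((3 / 2) * ‖gradient (ρ t) x‖ ^ 2 / (ρ t x) ^ 2 - lap (ρ t) x / ρ t x)) :
    t * deriv (fun s => ρ s x) t ≤ -((m : ℝ) - 1) * γ t * ρ t x := by
  have hm' : (2 : ℝ) ≤ m := by exact_mod_cast hm
  rw [hpde, IsLocalExtr.gradient_eq_zero (Or.inl hmin), norm_zero,
    zero_pow two_ne_zero, mul_zero, zero_div, zero_sub]
  exact add_le_of_nonpos_right (mul_nonpos_of_nonneg_of_nonpos (by positivity)
    (neg_nonpos.2 (div_nonneg (hmin.lap_nonneg hρ) hpos)))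

end ContinuityEquation

open Filter Topology in
theorem le_of_hasDerivAt_nonpos_upper_bound {G : ℝ → ℝ} {b c : ℝ} (hbc : b ≤ c)
    (hG : ContinuousOn G (Set.Icc b c))
    (hsupp : ∀ t ∈ Set.Ico b c, ∃ h : ℝ → ℝ, ∃ d ≤ 0,
      HasDerivAt h d t ∧ h t = G t ∧ ∀ᶠ s in 𝓝[>] t, G s ≤ h s) :
    G c ≤ G b := by
  refine image_le_of_liminf_slope_right_le_deriv_boundary (B := fun _ => G b) (B' := 0) hG le_rfl
    continuousOn_const (fun _ _ => hasDerivWithinAt_const _ _ _) (fun t ht r hr => ?_)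
    ⟨hbc, le_rfl⟩
  obtain ⟨h, d, hd, hder, hht, hle⟩ := hsupp t ht
  have hslope : ∀ᶠ z in 𝓝[>] t, slope h t z < r :=
    ((hasDerivAt_iff_tendsto_slope.1 hder).mono_left (nhdsGT_le_nhdsNE t)).eventually
      (eventually_lt_nhds (hd.trans_lt hr))
  refine (hslope.and (hle.and self_mem_nhdsWithin)).frequently.mono
    fun z ⟨hz, hGz, htz⟩ => lt_of_le_of_lt ?_ hz
  rw [slope_def_field, slope_def_field, hht]
  exact div_le_div_of_nonneg_right (by linarith) (sub_pos.2 htz).le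

lemma rhoMin_div_rhoMax_le {m n : ℕ} {L₀ a₁ a₀ : ℝ} {γ : ℝ → ℝ}
    {ρ : ℝ → EuclideanSpace ℝ (Fin n) → ℝ} (hm : 2 ≤ m) (hL₀ : 0 < L₀) (ha₁ : 0 ≤ a₁)
    (hcont : ContinuousOn (fun p : ℝ × EuclideanSpace ℝ (Fin n) => ρ p.1 p.2)
      (Set.Ioc a₁ a₀ ×ˢ Set.univ))
    (hpos : ∀ a ∈ Set.Ioc a₁ a₀, ∀ x, 0 < ρ a x)
    (hsmooth : ContDiffOn ℝ 2 (fun p : ℝ × EuclideanSpace ℝ (Fin n) => ρ p.1 p.2)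
      (Set.Ioo a₁ a₀ ×ˢ Set.univ))
    (hper : ∀ a ∈ Set.Ioc a₁ a₀, IsCellPeriodic L₀ (ρ a))
    (hpde : ∀ a ∈ Set.Ioo a₁ a₀, ∀ x,
      a * deriv (fun t => ρ t x) a =
        -((m : ℝ) - 1) * γ a * ρ a x +
          (((m : ℝ) - 2) / (2 * a ^ 2)) *
            ((3 / 2) * ‖gradient (ρ a) x‖ ^ 2 / (ρ a x) ^ 2 - lap (ρ a) x / ρ a x))
    {a : ℝ} (ha : a ∈ Set.Ioc a₁ a₀) :
    rhoMin L₀ ρ a₀ / rhoMax L₀ ρ a₀ ≤ rhoMin L₀ ρ a / rhoMax L₀ ρ a := by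
  have hsub : Set.Icc a a₀ ⊆ Set.Ioc a₁ a₀ := fun t ht => ⟨ha.1.trans_le ht.1, ht.2⟩
  have hslice : ∀ t ∈ Set.Ioc a₁ a₀, Continuous (ρ t) := fun t ht => continuous_slice hcont ht
  have hcont' := hcont.mono (Set.prod_mono hsub subset_rfl)
  refine le_of_hasDerivAt_nonpos_upper_bound ha.2 ((continuousOn_rhoMin hcont').div
    (continuousOn_rhoMax hcont') fun t ht =>
      (rhoMax_pos hL₀ (hslice t (hsub ht)) (hper t (hsub ht)) (hpos t (hsub ht))).ne')
    fun t ht => ?_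
  have htIoo : t ∈ Set.Ioo a₁ a₀ := ⟨ha.1.trans_le ht.1, ht.2⟩
  have htIoc : t ∈ Set.Ioc a₁ a₀ := Set.Ioo_subset_Ioc_self htIoo
  obtain ⟨xM, hxM, hmax⟩ := (hper t htIoc).exists_sSup_eq_isMaxOn hL₀ (hslice t htIoc)
  obtain ⟨xm, hxm, hmin⟩ := (hper t htIoc).exists_sInf_eq_isMinOn hL₀ (hslice t htIoc)
  have hsmooth_t := contDiffAt_slice hsmooth isOpen_Ioo htIoo
  have hgrowth_max := timeDeriv_ge_of_isLocalMax hm (hpos t htIoc xM).le (hsmooth_t xM)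
    (hmax.isLocalMax Filter.univ_mem) (hpde t htIoo xM)
  have hgrowth_min := timeDeriv_le_of_isLocalMin hm (hpos t htIoc xm).le (hsmooth_t xm)
    (hmin.isLocalMin Filter.univ_mem) (hpde t htIoo xm)
  refine ⟨fun s => ρ s xm / ρ s xM, _, ?_,
    (hasDerivAt_time two_ne_zero hsmooth isOpen_Ioo htIoo xm).div
      (hasDerivAt_time two_ne_zero hsmooth isOpen_Ioo htIoo xM) (hpos t htIoc xM).ne',
    by rw [Pi.div_apply, rhoMin, rhoMax, hxm, hxM], ?_⟩
  · have hnum : t * (deriv (fun s => ρ s xm) t * ρ t xM - ρ t xm * deriv (fun s => ρ s xM) t)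
        ≤ 0 := by
      nlinarith [mul_le_mul_of_nonneg_right hgrowth_min (hpos t htIoc xM).le,
        mul_le_mul_of_nonneg_left hgrowth_max (hpos t htIoc xm).le]
    exact div_nonpos_of_nonpos_of_nonneg
      (nonpos_of_mul_nonpos_right hnum (ha₁.trans_lt htIoo.1)) (sq_nonneg _)
  · filter_upwards [Ioc_mem_nhdsGT ht.2] with s hs
    have hs' : s ∈ Set.Ioc a₁ a₀ := ⟨htIoo.1.trans hs.1, hs.2⟩
    exact div_le_div₀ (hpos s hs' xm).le (rhoMin_le hL₀ (hslice s hs') (hper s hs') xm)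
      (hpos s hs' xM) (le_rhoMax hL₀ (hslice s hs') (hper s hs') xM)

lemma sub_div_mem_Icc_of_mem_Icc {lo hi μ r : ℝ} (hlo : 0 < lo) (hμ : μ ∈ Set.Icc lo hi)
    (hr : r ∈ Set.Icc lo hi) :
    (r - μ) / μ ∈ Set.Icc (-((hi - lo) / hi)) ((hi - lo) / hi / (1 - (hi - lo) / hi)) := by
  have hμ0 : 0 < μ := hlo.trans_le hμ.1
  have hhi : 0 < hi := hμ0.trans_le hμ.2
  have hrhs : (hi - lo) / hi / (1 - (hi - lo) / hi) = (hi - lo) / lo := by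
    rw [one_sub_div hhi.ne', sub_sub_cancel, div_div_div_cancel_right₀ hhi.ne']
  rw [hrhs, neg_div', Set.mem_Icc, div_le_div_iff₀ hhi hμ0, div_le_div_iff₀ hμ0 hlo]
  constructor <;> nlinarith [hr.1, hr.2, hμ.1, hμ.2]

lemma div_one_sub_le_div_one_sub {s s' : ℝ} (h : s ≤ s') (h' : s' < 1) :
    s / (1 - s) ≤ s' / (1 - s') := by
  rw [div_le_div_iff₀ (by linarith) (by linarith)]
  nlinarith

theorem density_contrast_bounds_general (m : ℕ) (hm : 3 ≤ m) (n : ℕ)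
    (L₀ : ℝ) (hL₀ : 0 < L₀)
    (a₁ a₀ : ℝ) (ha₁ : 0 ≤ a₁) (ha : a₁ < a₀)
    (γ : ℝ → ℝ)
    (ρ : ℝ → EuclideanSpace ℝ (Fin n) → ℝ)
    (hcont : ContinuousOn (fun p : ℝ × EuclideanSpace ℝ (Fin n) => ρ p.1 p.2)
      (Set.Ioc a₁ a₀ ×ˢ Set.univ))
    (hpos : ∀ a ∈ Set.Ioc a₁ a₀, ∀ x, 0 < ρ a x)
    (hsmooth : ContDiffOn ℝ (⊤ : ℕ∞) (fun p : ℝ × EuclideanSpace ℝ (Fin n) => ρ p.1 p.2)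
      (Set.Ioo a₁ a₀ ×ˢ Set.univ))
    (hper : ∀ a ∈ Set.Ioc a₁ a₀, ∀ i : Fin n, ∀ x,
      ρ a (x + L₀ • EuclideanSpace.single i (1 : ℝ)) = ρ a x)
    (hpde : ∀ a ∈ Set.Ioo a₁ a₀, ∀ x,
      a * deriv (fun t => ρ t x) a =
        -((m : ℝ) - 1) * γ a * ρ a x +
          (((m : ℝ) - 2) / (2 * a ^ 2)) *
            ((3 / 2) * ‖gradient (ρ a) x‖ ^ 2 / (ρ a x) ^ 2 - lap (ρ a) x / ρ a x)) :
    ∀ a ∈ Set.Ioc a₁ a₀,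
      (inhomMod L₀ ρ a ≤ inhomMod L₀ ρ a₀) ∧ (inhomMod L₀ ρ a₀ < 1) ∧
      ∀ x : EuclideanSpace ℝ (Fin n),
        (-(inhomMod L₀ ρ a₀) ≤ -(inhomMod L₀ ρ a)) ∧
        (-(inhomMod L₀ ρ a) ≤ densityContrast L₀ ρ a x) ∧
        (densityContrast L₀ ρ a x ≤ inhomMod L₀ ρ a / (1 - inhomMod L₀ ρ a)) ∧
        (inhomMod L₀ ρ a / (1 - inhomMod L₀ ρ a)
          ≤ inhomMod L₀ ρ a₀ / (1 - inhomMod L₀ ρ a₀)) := by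
  intro a ha'
  have ha₀ : a₀ ∈ Set.Ioc a₁ a₀ := ⟨ha, le_rfl⟩
  have hslice : ∀ t ∈ Set.Ioc a₁ a₀, Continuous (ρ t) := fun t ht => continuous_slice hcont ht
  have hmin_pos : ∀ t ∈ Set.Ioc a₁ a₀, 0 < rhoMin L₀ ρ t := fun t ht =>
    rhoMin_pos hL₀ (hslice t ht) (hper t ht) (hpos t ht)
  have hmax_pos : ∀ t ∈ Set.Ioc a₁ a₀, 0 < rhoMax L₀ ρ t := fun t ht =>
    rhoMax_pos hL₀ (hslice t ht) (hper t ht) (hpos t ht)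
  have hle : inhomMod L₀ ρ a ≤ inhomMod L₀ ρ a₀ := by
    rw [inhomMod_eq_one_sub (hmax_pos a ha').ne', inhomMod_eq_one_sub (hmax_pos a₀ ha₀).ne']
    linarith [rhoMin_div_rhoMax_le (by omega) hL₀ ha₁ hcont hpos
      (hsmooth.of_le (WithTop.coe_le_coe.2 le_top)) hper hpde ha']
  have hlt : inhomMod L₀ ρ a₀ < 1 := by
    rw [inhomMod_eq_one_sub (hmax_pos a₀ ha₀).ne']
    linarith [div_pos (hmin_pos a₀ ha₀) (hmax_pos a₀ ha₀)]
  refine ⟨hle, hlt, fun x => ?_⟩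
  have hcontrast := sub_div_mem_Icc_of_mem_Icc (hmin_pos a ha')
    (rhoMean_mem_Icc_rhoMin_rhoMax hL₀ (hslice a ha') (hper a ha'))
    ⟨rhoMin_le hL₀ (hslice a ha') (hper a ha') x, le_rhoMax hL₀ (hslice a ha') (hper a ha') x⟩
  exact ⟨neg_le_neg hle, hcontrast.1, hcontrast.2, div_one_sub_le_div_one_sub hle hlt⟩

/-- Corollary 3.2, bounds on the density contrast:
`Δ(a) ≤ Δ₀ < 1` and `−Δ₀ ≤ −Δ(a) ≤ δ(a,x) ≤ Δ(a)/(1−Δ(a)) ≤ Δ₀/(1−Δ₀)`. -/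
theorem density_contrast_bounds (m : ℕ) (hm : 3 ≤ m) (n : ℕ) (hn : n = m - 1)
    (L₀ : ℝ) (hL₀ : 0 < L₀)
    (a₁ a₀ : ℝ) (ha₁ : 0 ≤ a₁) (ha : a₁ < a₀)
    (γ : ℝ → ℝ) (hγ : ContinuousOn γ (Set.Ioc a₁ a₀))
    (ρ : ℝ → EuclideanSpace ℝ (Fin n) → ℝ)
    (hcont : ContinuousOn (fun p : ℝ × EuclideanSpace ℝ (Fin n) => ρ p.1 p.2)
      (Set.Ioc a₁ a₀ ×ˢ Set.univ))
    (hpos : ∀ a ∈ Set.Ioc a₁ a₀, ∀ x, 0 < ρ a x)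
    (hsmooth : ContDiffOn ℝ (⊤ : ℕ∞) (fun p : ℝ × EuclideanSpace ℝ (Fin n) => ρ p.1 p.2)
      (Set.Ioo a₁ a₀ ×ˢ Set.univ))
    (hper : ∀ a ∈ Set.Ioc a₁ a₀, ∀ i : Fin n, ∀ x,
      ρ a (x + L₀ • EuclideanSpace.single i (1 : ℝ)) = ρ a x)
    (hpde : ∀ a ∈ Set.Ioo a₁ a₀, ∀ x,
      a * deriv (fun t => ρ t x) a =
        -((m : ℝ) - 1) * γ a * ρ a x +
          (((m : ℝ) - 2) / (2 * a ^ 2)) *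
            ((3 / 2) * ‖gradient (ρ a) x‖ ^ 2 / (ρ a x) ^ 2 - lap (ρ a) x / ρ a x)) :
    ∀ a ∈ Set.Ioc a₁ a₀,
      (inhomMod L₀ ρ a ≤ inhomMod L₀ ρ a₀) ∧ (inhomMod L₀ ρ a₀ < 1) ∧
      ∀ x : EuclideanSpace ℝ (Fin n),
        (-(inhomMod L₀ ρ a₀) ≤ -(inhomMod L₀ ρ a)) ∧
        (-(inhomMod L₀ ρ a) ≤ densityContrast L₀ ρ a x) ∧
        (densityContrast L₀ ρ a x ≤ inhomMod L₀ ρ a / (1 - inhomMod L₀ ρ a)) ∧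
        (inhomMod L₀ ρ a / (1 - inhomMod L₀ ρ a)
          ≤ inhomMod L₀ ρ a₀ / (1 - inhomMod L₀ ρ a₀)) :=
  density_contrast_bounds_general m hm n L₀ hL₀ a₁ a₀ ha₁ ha γ ρ hcont hpos hsmooth hper hpde
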